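/- arXiv:1211.4271 — 5 statements merged into one kernel-verified Lean document; each statement's English description precedes it below -/
import Mathlib

section
/- Let m ≥ 2 and k ≥ 2. Let F_m denote the set of m-aperiodic reduced words over the alphabet A ∪ A⁻¹ of a free group of rank k (reduced words containing no subword of the form u^m with u nonempty). Then for all s ∈ ℕ: |F_m ∩ B(s+1)| ≥ (2k-1)·|F_m ∩ B(s)| − (2k/(2k-1))·Σ_{j≥1} (2k-1)^j·|F_m ∩ B(s+1−mj)|. -/
/-!
Each power-free reduced word of length at most `s` has at least `2k - 1` reduced one-letter
extensions, and different words have different extensions. An extension that contains an `m`-th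
power must end in it, because the word it extends is power-free; so it reads `p ++ u ^ m` with `p`
power-free of length at most `s + 1 - m |u|` and `u` one of the at most `2k (2k - 1) ^ (|u| - 1)`
reduced words of length `|u|`. Counting both ways gives the inequality, since
`2k (2k - 1) ^ (j - 1) = 2k / (2k - 1) * (2k - 1) ^ j`.
-/

open Filter Set

/-- A word over the alphabet `Fin k × Bool` (generators and their inverses) is reduced if
no two consecutive letters are mutually inverse. -/
def ReducedWord {k : ℕ} (l : List (Fin k × Bool)) : Prop :=
  l.Chain' fun a b => b ≠ (a.1, !a.2)

/-- A word contains an `m`-th power if some nonempty subword of the form `u^m` occurs. -/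
def ContainsPower {k : ℕ} (m : ℕ) (l : List (Fin k × Bool)) : Prop :=
  ∃ p u s : List (Fin k × Bool), u ≠ [] ∧ l = p ++ (List.replicate m u).flatten ++ s

/-- The number of `m`-aperiodic reduced words of length at most `s`. -/
noncomputable def apCount (k m s : ℕ) : ℕ :=
  {l : List (Fin k × Bool) | ReducedWord l ∧ ¬ ContainsPower m l ∧ l.length ≤ s}.ncard

open Finset

section

variable {k m : ℕ}

lemma reducedWord_iff {l : List (Fin k × Bool)} :
    ReducedWord l ↔ l.IsChain fun a b => b ≠ (a.1, !a.2) :=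
  Iff.rfl

lemma ReducedWord.infix {l₁ l₂ : List (Fin k × Bool)} (h : ReducedWord l₂) (hl : l₁ <:+: l₂) :
    ReducedWord l₁ :=
  List.IsChain.infix h hl

lemma ContainsPower.mono {l₁ l₂ : List (Fin k × Bool)} (h : ContainsPower m l₁)
    (hl : l₁ <:+: l₂) : ContainsPower m l₂ := by
  obtain ⟨p, u, q, hu, rfl⟩ := h
  obtain ⟨a, b, rfl⟩ := hl
  exact ⟨a ++ p, u, q ++ b, hu, by simp⟩

lemma ContainsPower.exists_eq_append_of_append_singleton {w : List (Fin k × Bool)}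
    {x : Fin k × Bool} (hw : ¬ ContainsPower m w) (h : ContainsPower m (w ++ [x])) :
    ∃ p u, u ≠ [] ∧ w ++ [x] = p ++ (List.replicate m u).flatten := by
  obtain ⟨p, u, q, hu, he⟩ := h
  refine ⟨p, u, hu, ?_⟩
  obtain rfl | hq := eq_or_ne q []
  · simpa using he
  · refine absurd ⟨p, u, q.dropLast, hu, ?_⟩ hw
    have := congrArg List.dropLast he
    rwa [List.dropLast_concat, List.dropLast_append_of_ne_nil hq] at this

end

namespace AperiodicWord

variable {k m : ℕ}

variable (k) in
noncomputable def reducedWords (n : ℕ) : Finset (List (Fin k × Bool)) :=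
  ((List.finite_length_eq _ n).subset fun _ hl => hl.2 :
    {l | ReducedWord l ∧ l.length = n}.Finite).toFinset

lemma mem_reducedWords {n : ℕ} {l : List (Fin k × Bool)} :
    l ∈ reducedWords k n ↔ ReducedWord l ∧ l.length = n :=
  Set.Finite.mem_toFinset _

variable (k m) in
noncomputable def aperiodicWords (s : ℕ) : Finset (List (Fin k × Bool)) :=
  ((List.finite_length_le _ s).subset fun _ hl => hl.2.2 :
    {l | ReducedWord l ∧ ¬ ContainsPower m l ∧ l.length ≤ s}.Finite).toFinset

lemma mem_aperiodicWords {s : ℕ} {l : List (Fin k × Bool)} :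
    l ∈ aperiodicWords k m s ↔ ReducedWord l ∧ ¬ ContainsPower m l ∧ l.length ≤ s :=
  Set.Finite.mem_toFinset _

lemma apCount_eq_card (s : ℕ) : apCount k m s = #(aperiodicWords k m s) :=
  Set.ncard_eq_toFinset_card _ _

variable (k) in
def admissible (w : List (Fin k × Bool)) : Finset (Fin k × Bool) :=
  w.getLast?.elim univ fun a => univ.erase (a.1, !a.2)

lemma reducedWord_append_singleton_iff {w : List (Fin k × Bool)} {x : Fin k × Bool}
    (hw : ReducedWord w) : ReducedWord (w ++ [x]) ↔ x ∈ admissible k w := by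
  rw [reducedWord_iff] at hw
  rw [reducedWord_iff, List.isChain_append]
  rcases h : w.getLast? with _ | a <;> simp [admissible, h, hw]

lemma card_admissible_nil : #(admissible k []) = 2 * k := by
  simp [admissible, mul_comm]

lemma card_admissible_of_ne_nil {w : List (Fin k × Bool)} (hw : w ≠ []) :
    #(admissible k w) = 2 * k - 1 := by
  simp [admissible, List.getLast?_eq_getLast_of_ne_nil hw, card_erase_of_mem, mul_comm]

lemma two_mul_sub_one_le_card_admissible (w : List (Fin k × Bool)) :
    2 * k - 1 ≤ #(admissible k w) := by
  obtain rfl | hw := eq_or_ne w []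
  · rw [card_admissible_nil]
    omega
  · rw [card_admissible_of_ne_nil hw]

def extensions (S : Finset (List (Fin k × Bool))) : Finset (List (Fin k × Bool)) :=
  S.biUnion fun w => (admissible k w).image (w ++ [·])

lemma mem_extensions {S : Finset (List (Fin k × Bool))} {l : List (Fin k × Bool)} :
    l ∈ extensions S ↔ ∃ w ∈ S, ∃ x ∈ admissible k w, w ++ [x] = l := by
  simp [extensions]

lemma card_extensions (S : Finset (List (Fin k × Bool))) :
    #(extensions S) = ∑ w ∈ S, #(admissible k w) := by
  rw [extensions, card_biUnion]
  · exact sum_congr rfl fun w _ => card_image_of_injective _ fun x y h => by simpa using h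
  · intro w₁ _ w₂ _ hne
    simp only [Function.onFun, Finset.disjoint_left, Finset.mem_image]
    rintro _ ⟨x, -, rfl⟩ ⟨y, -, h⟩
    exact hne (List.append_inj' h rfl).1.symm

lemma reducedWords_succ_subset (n : ℕ) :
    reducedWords k (n + 1) ⊆ extensions (reducedWords k n) := by
  intro l hl
  obtain ⟨hred, hlen⟩ := mem_reducedWords.1 hl
  have hne : l ≠ [] := List.ne_nil_of_length_eq_add_one hlen
  have hdrop : ReducedWord l.dropLast := hred.infix (List.dropLast_prefix l).isInfix
  refine mem_extensions.2 ⟨l.dropLast, mem_reducedWords.2 ⟨hdrop, by simp [hlen]⟩,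
    l.getLast hne, ?_, List.dropLast_append_getLast hne⟩
  rwa [← reducedWord_append_singleton_iff hdrop, List.dropLast_append_getLast hne]

lemma card_reducedWords_succ_le (n : ℕ) :
    #(reducedWords k (n + 1)) ≤ 2 * k * (2 * k - 1) ^ n := by
  have hsucc (n : ℕ) : #(reducedWords k (n + 1)) ≤ ∑ w ∈ reducedWords k n, #(admissible k w) :=
    card_extensions (reducedWords k n) ▸ Finset.card_le_card (reducedWords_succ_subset n)
  induction n with
  | zero =>
    have h0 : reducedWords k 0 = {[]} := by
      ext l
      simp +contextual [mem_reducedWords, reducedWord_iff]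
    simpa [h0, card_admissible_nil] using hsucc 0
  | succ n ih =>
    calc #(reducedWords k (n + 2))
        ≤ ∑ w ∈ reducedWords k (n + 1), #(admissible k w) := hsucc (n + 1)
      _ = #(reducedWords k (n + 1)) * (2 * k - 1) := by
        refine sum_const_nat fun w hw => card_admissible_of_ne_nil ?_
        exact List.ne_nil_of_length_eq_add_one (mem_reducedWords.1 hw).2
      _ ≤ 2 * k * (2 * k - 1) ^ (n + 1) := by
        rw [pow_succ, ← mul_assoc]
        exact Nat.mul_le_mul_right _ ih

lemma extensions_aperiodicWords_subset (hm : 1 ≤ m) (s : ℕ) :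
    extensions (aperiodicWords k m s) ⊆ aperiodicWords k m (s + 1) ∪
      {t ∈ Finset.Icc 1 (s + 1) | m * t ≤ s + 1}.biUnion fun t =>
        (reducedWords k t ×ˢ aperiodicWords k m (s + 1 - m * t)).image
          fun q => q.2 ++ (List.replicate m q.1).flatten := by
  intro l hl
  obtain ⟨w, hw, x, hx, rfl⟩ := mem_extensions.1 hl
  obtain ⟨hwred, hwap, hwlen⟩ := mem_aperiodicWords.1 hw
  have hred : ReducedWord (w ++ [x]) := (reducedWord_append_singleton_iff hwred).2 hx
  have hlen : (w ++ [x]).length = w.length + 1 := by simp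
  rw [Finset.mem_union]
  by_cases hpow : ContainsPower m (w ++ [x])
  · right
    obtain ⟨p, u, hu, he⟩ := hpow.exists_eq_append_of_append_singleton hwap
    have hlen' : w.length + 1 = p.length + m * u.length := by
      rw [← hlen, he]
      simp
    have ht : 1 ≤ u.length := List.length_pos_iff.2 hu
    have hmt : u.length ≤ m * u.length := Nat.le_mul_of_pos_left _ hm
    have hp : p <+: w := by
      refine List.prefix_of_prefix_length_le ?_ (List.prefix_append w [x]) (by omega)
      rw [he]
      exact List.prefix_append _ _
    have hu_infix : u <:+: w ++ [x] := by
      rw [he]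
      exact (List.infix_of_mem_flatten (List.mem_replicate.2 ⟨by omega, rfl⟩)).trans
        (List.suffix_append _ _).isInfix
    refine Finset.mem_biUnion.2 ⟨u.length, Finset.mem_filter.2 ⟨Finset.mem_Icc.2 ⟨ht, by omega⟩,
      by omega⟩, Finset.mem_image.2 ⟨(u, p), Finset.mem_product.2 ⟨?_, ?_⟩, he.symm⟩⟩
    · exact mem_reducedWords.2 ⟨hred.infix hu_infix, rfl⟩
    · show p ∈ aperiodicWords k m _
      exact mem_aperiodicWords.2
        ⟨hwred.infix hp.isInfix, fun h => hwap (h.mono hp.isInfix), by omega⟩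
  · exact Or.inl (mem_aperiodicWords.2 ⟨hred, hpow, by omega⟩)

lemma apCount_mul_le (hm : 1 ≤ m) (s : ℕ) :
    apCount k m s * (2 * k - 1) ≤ apCount k m (s + 1) +
      ∑ t ∈ Finset.Icc 1 (s + 1),
        2 * k * (2 * k - 1) ^ (t - 1) *
          if m * t ≤ s + 1 then apCount k m (s + 1 - m * t) else 0 := by
  simp only [apCount_eq_card]
  calc #(aperiodicWords k m s) * (2 * k - 1)
      ≤ ∑ w ∈ aperiodicWords k m s, #(admissible k w) := by
        rw [← smul_eq_mul]
        exact card_nsmul_le_sum _ _ _ fun w _ => two_mul_sub_one_le_card_admissible w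
    _ = #(extensions (aperiodicWords k m s)) := (card_extensions _).symm
    _ ≤ #(aperiodicWords k m (s + 1)) + ∑ t ∈ Finset.Icc 1 (s + 1) with m * t ≤ s + 1,
          #(reducedWords k t) * #(aperiodicWords k m (s + 1 - m * t)) := by
        refine (Finset.card_le_card (extensions_aperiodicWords_subset hm s)).trans
          ((Finset.card_union_le _ _).trans (Nat.add_le_add_left (card_biUnion_le.trans
            (sum_le_sum fun t _ => card_image_le.trans (card_product _ _).le)) _))
    _ ≤ _ := by
        rw [sum_filter]
        refine Nat.add_le_add_left (sum_le_sum fun t ht => ?_) _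
        split_ifs
        · have h := card_reducedWords_succ_le (k := k) (t - 1)
          rw [Nat.sub_add_cancel (mem_Icc.1 ht).1] at h
          exact Nat.mul_le_mul_right _ h
        · rfl

end AperiodicWord

/-- Recurrence: `|F_m ∩ B(s+1)| ≥ (2k-1)|F_m ∩ B(s)| - (2k/(2k-1)) Σ_{j≥1} (2k-1)^j |F_m ∩ B(s+1-mj)|`,
where the terms with `s+1-mj < 0` vanish. -/
theorem aperiodic_count_recurrence (k m : ℕ) (hk : 2 ≤ k) (hm : 2 ≤ m) (s : ℕ) :
    (2 * k - 1 : ℝ) * apCount k m s -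
      (2 * k / (2 * k - 1) : ℝ) *
        ∑ j ∈ Finset.Icc 1 (s + 1),
          (2 * k - 1 : ℝ) ^ j * (if m * j ≤ s + 1 then (apCount k m (s + 1 - m * j) : ℝ) else 0)
      ≤ (apCount k m (s + 1) : ℝ) := by
  have hrec := (Nat.cast_le (α := ℝ)).2
    (AperiodicWord.apCount_mul_le (k := k) (m := m) (by omega) s)
  push_cast [Nat.cast_sub (by omega : 1 ≤ 2 * k)] at hrec
  have hne : (2 * k - 1 : ℝ) ≠ 0 := by
    have : (2 : ℝ) ≤ k := by exact_mod_cast hk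
    linarith
  have hcoeff (j : ℕ) (hj : j ∈ Finset.Icc 1 (s + 1)) :
      (2 * k / (2 * k - 1) : ℝ) * (2 * k - 1) ^ j = 2 * k * (2 * k - 1) ^ (j - 1) := by
    rw [← Nat.sub_add_cancel (Finset.mem_Icc.1 hj).1, pow_succ]
    field_simp
    simp
  rw [Finset.mul_sum, sub_le_iff_le_add]
  simp_rw [← mul_assoc]
  rw [Finset.sum_congr rfl fun j hj => by rw [hcoeff j hj]]
  linarith
end

section
/- Let k ≥ 2, m ≥ 2, and let μ ∈ ((2k-1)^{1/m}, 2k-1) satisfy (2k-1) − 2kμ/(μ^m − (2k-1)) ≥ μ. Suppose a sequence (c_s)_{s∈ℕ} of nonnegative reals satisfies c_0 = 1 and for all s: c_{s+1} ≥ (2k-1)c_s − (2k/(2k-1))·Σ_{j≥1}(2k-1)^j·c_{s+1−mj} (with c_t = 0 for t < 0). If additionally c_s ≥ μ·c_{s-1} for all s whenever this is forced inductively, then c_s ≥ μ^s for all s. -/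
open Filter Set

/-!
Put `K = 2k - 1`. By strong induction assume `μ c_t ≤ c_{t+1}` for all `t < s`. Chaining these
ratios gives `μ^{mj-1} c_{s+1-mj} ≤ c_s`, so the `j`-th correction term `K^j c_{s+1-mj}` is at most
`μ c_s (K/μ^m)^j`. Since `μ^m > K`, the geometric series sums to at most `μ c_s K/(μ^m - K)`, and
the recursion yields `c_{s+1} ≥ (K - 2kμ/(μ^m - K)) c_s ≥ μ c_s`. Chaining once more from `c_0 = 1`
gives `c_s ≥ μ^s`.
-/

open Finset

theorem pow_sub_mul_le_of_mul_le_succ {c : ℕ → ℝ} {μ : ℝ} (hμ : 0 ≤ μ) {a b : ℕ} (hab : a ≤ b)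
    (h : ∀ t, a ≤ t → t < b → μ * c t ≤ c (t + 1)) : μ ^ (b - a) * c a ≤ c b := by
  induction b, hab using Nat.le_induction with
  | base => simp
  | succ n han ih =>
    calc μ ^ (n + 1 - a) * c a = μ * (μ ^ (n - a) * c a) := by
          rw [Nat.sub_add_comm han, pow_succ]; ring
      _ ≤ μ * c n := by gcongr; exact ih fun t hat htn => h t hat (htn.trans n.lt_succ_self)
      _ ≤ c (n + 1) := h n han n.lt_succ_self

theorem sum_Icc_one_div_pow_le {K M : ℝ} (hK : 0 ≤ K) (hKM : K < M) (n : ℕ) :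
    ∑ j ∈ Icc 1 n, (K / M) ^ j ≤ K / (M - K) := by
  have hM : 0 < M := hK.trans_lt hKM
  rw [← Finset.Ico_add_one_right_eq_Icc]
  calc ∑ j ∈ Ico 1 (n + 1), (K / M) ^ j ≤ (K / M) ^ 1 / (1 - K / M) :=
        geom_sum_Ico_le_of_lt_one (by positivity) ((div_lt_one hM).mpr hKM)
    _ = K / (M - K) := by
        rw [pow_one, one_sub_div hM.ne', div_div_div_cancel_right₀ hM.ne']

theorem pow_mul_lagged_le {c : ℕ → ℝ} {K μ : ℝ} {m s j : ℕ} (hK : 0 ≤ K) (hμ : 0 < μ)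
    (hmj : 1 ≤ m * j) (hmjs : m * j ≤ s + 1) (hgrowth : ∀ t < s, μ * c t ≤ c (t + 1)) :
    K ^ j * c (s + 1 - m * j) ≤ μ * c s * (K / μ ^ m) ^ j := by
  have hchain : μ ^ (m * j - 1) * c (s + 1 - m * j) ≤ c s := by
    have h := pow_sub_mul_le_of_mul_le_succ hμ.le (by omega : s + 1 - m * j ≤ s)
      fun t _ hts => hgrowth t hts
    rwa [show s - (s + 1 - m * j) = m * j - 1 by omega] at h
  have hpow : μ ^ (m * j) = μ * μ ^ (m * j - 1) := by
    rw [← pow_succ', Nat.sub_add_cancel hmj]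
  calc K ^ j * c (s + 1 - m * j)
        = μ * (μ ^ (m * j - 1) * c (s + 1 - m * j)) * (K / μ ^ m) ^ j := by
          rw [div_pow, ← pow_mul, hpow]; field_simp
    _ ≤ μ * c s * (K / μ ^ m) ^ j := by gcongr

theorem sum_lagged_le {c : ℕ → ℝ} {K μ : ℝ} {m s : ℕ} (hK : 0 ≤ K) (hμ : 0 < μ)
    (hKμ : K < μ ^ m) (hm : 1 ≤ m) (hc : 0 ≤ c s) (hgrowth : ∀ t < s, μ * c t ≤ c (t + 1)) :
    ∑ j ∈ Icc 1 (s + 1), K ^ j * (if m * j ≤ s + 1 then c (s + 1 - m * j) else 0)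
      ≤ μ * c s * (K / (μ ^ m - K)) := by
  calc _ ≤ ∑ j ∈ Icc 1 (s + 1), μ * c s * (K / μ ^ m) ^ j := by
        refine sum_le_sum fun j hj => ?_
        split_ifs with hmjs
        · exact pow_mul_lagged_le hK hμ (by nlinarith [(mem_Icc.mp hj).1]) hmjs hgrowth
        · rw [mul_zero]; positivity
    _ = μ * c s * ∑ j ∈ Icc 1 (s + 1), (K / μ ^ m) ^ j := (mul_sum ..).symm
    _ ≤ μ * c s * (K / (μ ^ m - K)) := by gcongr; exact sum_Icc_one_div_pow_le hK hKμ _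

theorem mul_le_succ_of_aperiodic_recursion {k m s : ℕ} (hk : 1 ≤ k) (hm : 1 ≤ m) {μ : ℝ}
    (hμ : 0 < μ) (hKμ : (2 * k - 1 : ℝ) < μ ^ m)
    (hkey : μ ≤ (2 * k - 1 : ℝ) - 2 * k * μ / (μ ^ m - (2 * k - 1)))
    {c : ℕ → ℝ} (hc : 0 ≤ c s)
    (hrec : (2 * k - 1 : ℝ) * c s -
        (2 * k / (2 * k - 1) : ℝ) *
          ∑ j ∈ Icc 1 (s + 1),
            (2 * k - 1 : ℝ) ^ j * (if m * j ≤ s + 1 then c (s + 1 - m * j) else 0)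
        ≤ c (s + 1))
    (hgrowth : ∀ t < s, μ * c t ≤ c (t + 1)) : μ * c s ≤ c (s + 1) := by
  have hK : (1 : ℝ) ≤ 2 * k - 1 := by
    have : (1 : ℝ) ≤ k := by exact_mod_cast hk
    linarith
  have hD : (0 : ℝ) < μ ^ m - (2 * k - 1) := by linarith
  calc μ * c s ≤ ((2 * k - 1 : ℝ) - 2 * k * μ / (μ ^ m - (2 * k - 1))) * c s := by gcongr
    _ = (2 * k - 1 : ℝ) * c s - (2 * k / (2 * k - 1) : ℝ) *
          (μ * c s * ((2 * k - 1) / (μ ^ m - (2 * k - 1)))) := by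
        field_simp
    _ ≤ (2 * k - 1 : ℝ) * c s - (2 * k / (2 * k - 1) : ℝ) *
          ∑ j ∈ Icc 1 (s + 1),
            (2 * k - 1 : ℝ) ^ j * (if m * j ≤ s + 1 then c (s + 1 - m * j) else 0) := by
        gcongr
        exact sum_lagged_le (by linarith) hμ hKμ hm hc hgrowth
    _ ≤ c (s + 1) := hrec

theorem aperiodic_inductive_bound_general (k m : ℕ) (hk : 2 ≤ k) (hm : 2 ≤ m) (μ : ℝ)
    (hμ₁ : (2 * k - 1 : ℝ) ^ ((m : ℝ)⁻¹) < μ)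
    (hkey : μ ≤ (2 * k - 1 : ℝ) - 2 * k * μ / (μ ^ m - (2 * k - 1)))
    (c : ℕ → ℝ) (hnonneg : ∀ s, 0 ≤ c s) (hc0 : c 0 = 1)
    (hrec : ∀ s : ℕ,
      (2 * k - 1 : ℝ) * c s -
        (2 * k / (2 * k - 1) : ℝ) *
          ∑ j ∈ Finset.Icc 1 (s + 1),
            (2 * k - 1 : ℝ) ^ j * (if m * j ≤ s + 1 then c (s + 1 - m * j) else 0)
        ≤ c (s + 1)) :
    (∀ s : ℕ, 1 ≤ s → μ * c (s - 1) ≤ c s) ∧ (∀ s : ℕ, μ ^ s ≤ c s) := by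
  have hK : (0 : ℝ) ≤ 2 * k - 1 := by
    have : (2 : ℝ) ≤ k := by exact_mod_cast hk
    linarith
  have hμ : 0 < μ := (Real.rpow_nonneg hK _).trans_lt hμ₁
  have hKμ : (2 * k - 1 : ℝ) < μ ^ m := by
    rw [Real.rpow_inv_lt_iff_of_pos hK hμ.le (by positivity), Real.rpow_natCast] at hμ₁
    exact hμ₁
  have hgrowth (s : ℕ) : μ * c s ≤ c (s + 1) := Nat.strong_induction_on s fun s ih =>
    mul_le_succ_of_aperiodic_recursion (by omega) (by omega) hμ hKμ hkey (hnonneg s) (hrec s) ih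
  refine ⟨fun s hs => ?_, fun s => ?_⟩
  · simpa [Nat.sub_add_cancel hs] using hgrowth (s - 1)
  · simpa [hc0] using pow_sub_mul_le_of_mul_le_succ hμ.le s.zero_le fun t _ _ => hgrowth t

/-- The inductive counting argument: if a nonnegative sequence `c` satisfies `c 0 = 1` and the
recursive lower bound coming from counting aperiodic words, and `μ ∈ ((2k-1)^{1/m}, 2k-1)`
satisfies `(2k-1) - 2kμ/(μ^m - (2k-1)) ≥ μ`, then `c s ≥ μ·c (s-1)` for all `s ≥ 1` and
consequently `c s ≥ μ^s` for all `s`. -/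
theorem aperiodic_inductive_bound (k m : ℕ) (hk : 2 ≤ k) (hm : 2 ≤ m) (μ : ℝ)
    (hμ₁ : (2 * k - 1 : ℝ) ^ ((m : ℝ)⁻¹) < μ) (hμ₂ : μ < 2 * k - 1)
    (hkey : μ ≤ (2 * k - 1 : ℝ) - 2 * k * μ / (μ ^ m - (2 * k - 1)))
    (c : ℕ → ℝ) (hnonneg : ∀ s, 0 ≤ c s) (hc0 : c 0 = 1)
    (hrec : ∀ s : ℕ,
      (2 * k - 1 : ℝ) * c s -
        (2 * k / (2 * k - 1) : ℝ) *
          ∑ j ∈ Finset.Icc 1 (s + 1),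
            (2 * k - 1 : ℝ) ^ j * (if m * j ≤ s + 1 then c (s + 1 - m * j) else 0)
        ≤ c (s + 1)) :
    (∀ s : ℕ, 1 ≤ s → μ * c (s - 1) ≤ c s) ∧ (∀ s : ℕ, μ ^ s ≤ c s) :=
  aperiodic_inductive_bound_general k m hk hm μ hμ₁ hkey c hnonneg hc0 hrec
end

section
/- For every a > 2k with k ≥ 2, setting λ = 2k-1 and μ_m = λ(1 − a·λ^{−m}), the quantity f_m(μ_m) = λ − 2k·μ_m/(μ_m^m − λ) satisfies f_m(μ_m) ≥ μ_m for all sufficiently large m. -/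
/-! With `x_m = a λ⁻ᵐ` we have `λ - μ_m = a λ / λᵐ`, so after clearing the (eventually positive)
denominator the claim reads `2k μ_m ≤ a λ (μ_mᵐ - λ) / λᵐ`. Since `m x_m → 0`, the factor
`(μ_m / λ)ᵐ = (1 - x_m)ᵐ` tends to `1`; hence the right side tends to `a λ` while the left side
tends to `2k λ < a λ`. -/

open Filter Topology

section

variable {l : ℝ}

lemma tendsto_one_sub_div_pow_pow (hl : 1 < l) (a : ℝ) :
    Tendsto (fun m : ℕ => (1 - a / l ^ m) ^ m) atTop (𝓝 1) := by
  have h : Tendsto (fun m : ℕ => (m : ℝ) * (-a / l ^ m)) atTop (𝓝 0) := by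
    simpa using ((tendsto_pow_const_div_const_pow_of_one_lt 1 hl).const_mul (-a)).congr
      fun m => by ring
  simpa [sub_eq_add_neg, neg_div] using Real.tendsto_one_add_pow_exp_of_tendsto h

lemma tendsto_pow_sub_div_pow (hl : 1 < l) (a : ℝ) :
    Tendsto (fun m : ℕ => ((l * (1 - a / l ^ m)) ^ m - l) / l ^ m) atTop (𝓝 1) := by
  have hpow := tendsto_pow_atTop_atTop_of_one_lt hl
  simpa using ((tendsto_one_sub_div_pow_pow hl a).sub
    ((tendsto_const_nhds (x := l)).div_atTop hpow)).congr fun m => by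
      rw [mul_pow, sub_div, mul_div_cancel_left₀ _ (pow_ne_zero m (by linarith))]

lemma eventually_le_sub_div_pow_sub (hl : 1 < l) {a c : ℝ} (hca : c < a) :
    ∀ᶠ m : ℕ in atTop, l * (1 - a / l ^ m) ≤
      l - c * (l * (1 - a / l ^ m)) / ((l * (1 - a / l ^ m)) ^ m - l) := by
  have hμ : Tendsto (fun m : ℕ => l * (1 - a / l ^ m)) atTop (𝓝 l) := by
    simpa using ((tendsto_const_nhds.div_atTop
      (tendsto_pow_atTop_atTop_of_one_lt hl)).const_sub 1).const_mul l
  have hD := tendsto_pow_sub_div_pow hl a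
  filter_upwards [hD.eventually (lt_mem_nhds one_pos),
    (hμ.const_mul c).eventually_lt (hD.const_mul (a * l)) (by nlinarith)] with m hpos hlt
  have hlm : 0 < l ^ m := pow_pos (by linarith) m
  set μ := l * (1 - a / l ^ m)
  have hsub : l - μ = a * l / l ^ m := by simp only [μ]; ring
  rw [le_sub_comm, div_le_iff₀ ((div_pos_iff_of_pos_right hlm).mp hpos), hsub]
  calc c * μ ≤ a * l * ((μ ^ m - l) / l ^ m) := hlt.le
    _ = a * l / l ^ m * (μ ^ m - l) := by ring

end

/-- For `k ≥ 2`, `λ = 2k-1` and `a > 2k`, setting `μ_m = λ(1 - a·λ^{-m})`, the quantity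
`f_m(μ_m) = λ - 2k·μ_m/(μ_m^m - λ)` satisfies `f_m(μ_m) ≥ μ_m` for all sufficiently large `m`. -/
theorem f_ge_mu_eventually (k : ℕ) (hk : 2 ≤ k) (a : ℝ) (ha : 2 * k < a) :
    ∃ m₀ : ℕ, ∀ m : ℕ, m₀ ≤ m →
      (2 * k - 1 : ℝ) * (1 - a / (2 * k - 1 : ℝ) ^ m) ≤
        (2 * k - 1 : ℝ) -
          2 * k * ((2 * k - 1 : ℝ) * (1 - a / (2 * k - 1 : ℝ) ^ m)) /
            (((2 * k - 1 : ℝ) * (1 - a / (2 * k - 1 : ℝ) ^ m)) ^ m - (2 * k - 1 : ℝ)) := by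
  have hl : (1 : ℝ) < 2 * k - 1 := by
    have : (2 : ℝ) ≤ k := by exact_mod_cast hk
    linarith
  exact eventually_atTop.mp (eventually_le_sub_div_pow_sub hl ha)
end

section
/- Let G be a finitely generated group with growth rate λ > 1 such that there exists α ≥ 1 with |B(r)| ≤ α·λ^r for all r ≥ 0. If T ⊆ G is a subset such that there exists a > 0 with: for all r ≥ 0 there exists s ≥ r with |T ∩ B(s)| ≥ a·λ^s, and T has the property that every element of T ∩ B(s) factors as uv with u ∈ T ∩ B(r) and |v| ≤ s − r + 1, then there exists β > 0 with |T ∩ B(r)| ≥ β·λ^r for all r ≥ 0. -/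
open Filter Set

/-- Word length of `g` with respect to the symmetrized generating set `S ∪ S⁻¹`. -/
noncomputable def wordLength {G : Type*} [Group G] (S : Set G) (g : G) : ℕ :=
  sInf {n | ∃ l : List G, l.length = n ∧ (∀ x ∈ l, x ∈ S ∪ S⁻¹) ∧ l.prod = g}

/-- The ball of radius `r` in the word metric. -/
noncomputable def wordBall {G : Type*} [Group G] (S : Set G) (r : ℕ) : Set G :=
  {g | wordLength S g ≤ r}

/-!
Every element of `T ∩ B(s)` is a product `u * v` with `u ∈ T ∩ B(r)` and `v ∈ B(s - r + 1)`, so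
`a λ^s ≤ |T ∩ B(s)| ≤ |T ∩ B(r)| · |B(s - r + 1)| ≤ |T ∩ B(r)| · α λ^(s - r + 1)`, and dividing
by `α λ^(s - r + 1)` gives `|T ∩ B(r)| ≥ (a / (α λ)) λ^r`.
-/

open scoped Pointwise

section WordMetric

variable {G : Type*} [Group G] {S : Set G}

lemma exists_list_length_eq_wordLength (hgen : Subgroup.closure S = ⊤) (g : G) :
    ∃ l : List G, l.length = wordLength S g ∧ (∀ x ∈ l, x ∈ S ∪ S⁻¹) ∧ l.prod = g := by
  have hg : g ∈ Submonoid.closure (S ∪ S⁻¹) := by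
    rw [← Subgroup.closure_toSubmonoid, hgen]; exact Subgroup.mem_top g
  obtain ⟨l, hl, hprod⟩ := Submonoid.exists_list_of_mem_closure hg
  exact Nat.sInf_mem
    (s := {n | ∃ l : List G, l.length = n ∧ (∀ x ∈ l, x ∈ S ∪ S⁻¹) ∧ l.prod = g})
    ⟨l.length, l, rfl, hl, hprod⟩

lemma wordBall_finite (hS : S.Finite) (hgen : Subgroup.closure S = ⊤) (r : ℕ) :
    (wordBall S r).Finite := by
  have : Finite ↥(S ∪ S⁻¹) := (hS.union hS.inv).to_subtype
  have hsub : wordBall S r ⊆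
      (fun l : List ↥(S ∪ S⁻¹) => (l.map Subtype.val).prod) '' {l | l.length ≤ r} := by
    intro g hg
    obtain ⟨l, hlen, hmem, hprod⟩ := exists_list_length_eq_wordLength hgen g
    refine ⟨l.pmap Subtype.mk hmem, by simpa [hlen, wordBall] using hg, ?_⟩
    simp [List.map_pmap, hprod]
  exact ((List.finite_length_le _ r).image _).subset hsub

end WordMetric

lemma Set.ncard_le_ncard_mul_ncard_of_subset_mul {M : Type*} [Mul M] [IsCancelMul M]
    {s t u : Set M}
    (h : s ⊆ t * u) (ht : t.Finite) (hu : u.Finite) : s.ncard ≤ t.ncard * u.ncard := by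
  simpa only [Nat.card_coe_set_eq] using (ncard_le_ncard h (ht.mul hu)).trans natCard_mul_le

lemma div_mul_mul_pow_le_of_mul_pow_le {lam α a N : ℝ} {r s : ℕ} (hrs : r ≤ s)
    (hlam : 0 < lam) (hα : 0 < α) (h : a * lam ^ s ≤ N * (α * lam ^ (s - r + 1))) :
    a / (α * lam) * lam ^ r ≤ N := by
  obtain ⟨k, rfl⟩ := Nat.exists_eq_add_of_le hrs
  rw [Nat.add_sub_cancel_left] at h
  rw [div_mul_eq_mul_div, div_le_iff₀ (by positivity)]
  refine le_of_mul_le_mul_right ?_ (pow_pos hlam k)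
  calc a * lam ^ r * lam ^ k = a * lam ^ (r + k) := by ring
    _ ≤ N * (α * lam ^ (k + 1)) := h
    _ = N * (α * lam) * lam ^ k := by ring

/-- If `|B(r)| ≤ α·λ^r`, `T` has `|T ∩ B(s)| ≥ a·λ^s` for arbitrarily large `s`, and every
element of `T ∩ B(s)` factors as `uv` with `u ∈ T ∩ B(r)` and `|v| ≤ s - r + 1`, then
`|T ∩ B(r)| ≥ β·λ^r` for some `β > 0` and all `r`. -/
theorem essential_type_uniform_growth {G : Type*} [Group G] (S : Finset G)
    (hgen : Subgroup.closure (S : Set G) = ⊤) (lam α : ℝ) (hlam : 1 < lam) (hα : 1 ≤ α)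
    (hcoo : ∀ r : ℕ, ((wordBall (S : Set G) r).ncard : ℝ) ≤ α * lam ^ r)
    (T : Set G)
    (ha : ∃ a > (0 : ℝ), ∀ r : ℕ, ∃ s ≥ r,
      a * lam ^ s ≤ ((T ∩ wordBall (S : Set G) s).ncard : ℝ))
    (hfact : ∀ r s : ℕ, r ≤ s → ∀ g ∈ T ∩ wordBall (S : Set G) s,
      ∃ u v : G, u ∈ T ∩ wordBall (S : Set G) r ∧
        wordLength (S : Set G) v ≤ s - r + 1 ∧ g = u * v) :
    ∃ β > (0 : ℝ), ∀ r : ℕ, β * lam ^ r ≤ ((T ∩ wordBall (S : Set G) r).ncard : ℝ) := by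
  obtain ⟨a, ha0, hgrowth⟩ := ha
  have hlam0 : 0 < lam := one_pos.trans hlam
  have hα0 : 0 < α := one_pos.trans_le hα
  refine ⟨a / (α * lam), by positivity, fun r => ?_⟩
  obtain ⟨s, hrs, hs⟩ := hgrowth r
  set B := wordBall (S : Set G)
  have hsub : T ∩ B s ⊆ (T ∩ B r) * B (s - r + 1) := by
    intro g hg
    obtain ⟨u, v, hu, hv, rfl⟩ := hfact r s hrs g hg
    exact mul_mem_mul hu hv
  have hcard := ncard_le_ncard_mul_ncard_of_subset_mul hsub
    ((wordBall_finite S.finite_toSet hgen r).inter_of_right T)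
    (wordBall_finite S.finite_toSet hgen (s - r + 1))
  refine div_mul_mul_pow_le_of_mul_pow_le hrs hlam0 hα0 ?_
  calc a * lam ^ s ≤ ((T ∩ B s).ncard : ℝ) := hs
    _ ≤ (T ∩ B r).ncard * (B (s - r + 1)).ncard := by exact_mod_cast hcard
    _ ≤ (T ∩ B r).ncard * (α * lam ^ (s - r + 1)) := by gcongr; exact hcoo _
end

section
/- Let λ > 1, μ ∈ (1, λ), r > 0, and constants κ_1, κ_2 > 0, L ≥ 0, τ > 0, m ∈ ℕ with μ^m > λ. Suppose (c_s)_{s∈ℝ_+} is a nondecreasing nonnegative function with c_0 ≥ 1 satisfying for all s ≥ 0: c_{s+r} ≥ κ_1·λ^r·c_s − κ_2·λ^{2(L+r)}·Σ_{j≥1} λ^{jτ}·c_{s+r+2L−mjτ} (with c_t = 0 for t < 0), and suppose mτ ≥ 2L + r and κ_1·λ^r − κ_2·λ^{4(L+r)}·λ^τ/(μ^{mτ}−λ^τ) ≥ μ^r. Then c_{ir} ≥ μ^{ir} for all i ∈ ℕ. -/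
open Filter Set Real

/-!
Strong induction on `i` gives the one-step growth `μ ^ r * c (i r) ≤ c ((i + 1) r)`. Chaining the
steps already proved shows that below `s = i r` the function decays at least geometrically,
`c (s - t) ≤ μ ^ (r - t) * c s`. In the recursion this bounds the `j`-th correction term by
`μ ^ (2 (L + r)) * c s * q ^ j` with `q = λ ^ τ / μ ^ (m τ) < 1`, and summing the geometric series
`∑_{j ≥ 1} q ^ j = λ ^ τ / (μ ^ (m τ) - λ ^ τ)` the hypothesis on `κ₁, κ₂` yields the next step.
-/

theorem hasSum_pnat_geometric_of_lt_one {q : ℝ} (h₀ : 0 ≤ q) (h₁ : q < 1) :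
    HasSum (fun j : ℕ+ => q ^ (j : ℕ)) (q / (1 - q)) := by
  rw [hasSum_pnat_iff (f := fun n => q ^ n), pow_zero, div_add_one (sub_pos.2 h₁).ne', add_sub_cancel, one_div]
  exact hasSum_geometric_of_lt_one h₀ h₁

theorem pow_mul_le_of_mul_le_succ {α : Type*} [Semiring α] [Preorder α] [PosMulMono α]
    {a : ℕ → α} {ρ : α} {n : ℕ} (hρ : 0 ≤ ρ) (h : ∀ k < n, ρ * a k ≤ a (k + 1))
    {k d : ℕ} (hkd : k + d ≤ n) : ρ ^ d * a k ≤ a (k + d) := by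
  induction d with
  | zero => simp
  | succ d ih =>
    calc ρ ^ (d + 1) * a k = ρ * (ρ ^ d * a k) := by rw [pow_succ', mul_assoc]
      _ ≤ ρ * a (k + d) := mul_le_mul_of_nonneg_left (ih (by omega)) hρ
      _ ≤ a (k + d + 1) := h _ (by omega)

section Decay

variable {c : ℝ → ℝ} {μ r : ℝ}

theorem apply_sub_le_rpow_mul_of_step {n : ℕ} {t : ℝ} (hμ : 1 ≤ μ) (hr : 0 < r) (ht : 0 ≤ t)
    (hnonneg : ∀ t : ℝ, 0 ≤ c t) (hmono : ∀ s t : ℝ, 0 ≤ s → s ≤ t → c s ≤ c t)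
    (hzero : ∀ t : ℝ, t < 0 → c t = 0)
    (hstep : ∀ k < n, μ ^ r * c (k * r) ≤ c ((k + 1 : ℕ) * r)) :
    c (n * r - t) ≤ μ ^ (r - t) * c (n * r) := by
  rcases lt_or_ge (n * r - t) 0 with hneg | hpos
  · rw [hzero _ hneg]
    exact mul_nonneg (by positivity) (hnonneg _)
  set j := ⌊t / r⌋₊
  have hjt : (j : ℝ) * r ≤ t := (le_div_iff₀ hr).1 (Nat.floor_le (by positivity))
  have htj : t < (j + 1) * r := (div_lt_iff₀ hr).1 (Nat.lt_floor_add_one _)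
  have hjn : j ≤ n := by
    exact_mod_cast le_of_mul_le_mul_right (hjt.trans (by linarith) : (j : ℝ) * r ≤ n * r) hr
  have hgrowth : (μ ^ r) ^ j * c ((n - j : ℕ) * r) ≤ c (n * r) := by
    have := pow_mul_le_of_mul_le_succ (a := fun k : ℕ => c (k * r)) (by positivity) hstep
      (k := n - j) (d := j) (by omega)
    rwa [Nat.sub_add_cancel hjn] at this
  have hone : 1 ≤ μ ^ (r - t) * (μ ^ r) ^ j := by
    rw [← rpow_natCast, ← rpow_mul (by positivity), ← rpow_add (by positivity)]
    exact one_le_rpow hμ (by nlinarith)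
  calc c (n * r - t) ≤ c ((n - j : ℕ) * r) :=
        hmono _ _ hpos (by rw [Nat.cast_sub hjn]; linarith)
    _ ≤ μ ^ (r - t) * ((μ ^ r) ^ j * c ((n - j : ℕ) * r)) := by
        rw [← mul_assoc]
        exact le_mul_of_one_le_left (hnonneg _) hone
    _ ≤ μ ^ (r - t) * c (n * r) := mul_le_mul_of_nonneg_left hgrowth (by positivity)

theorem tsum_rpow_mul_apply_le {lam τ s a : ℝ} {m : ℕ} (hlam : 0 < lam) (hμ : 0 < μ)
    (hτ : 0 ≤ τ) (hq : lam ^ τ < μ ^ ((m : ℝ) * τ)) (ha : a ≤ m * τ)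
    (hnonneg : ∀ t : ℝ, 0 ≤ c t) (hdecay : ∀ t : ℝ, 0 ≤ t → c (s - t) ≤ μ ^ (r - t) * c s) :
    ∑' j : ℕ+, lam ^ ((j : ℝ) * τ) * c (s + a - (m : ℝ) * (j : ℝ) * τ)
      ≤ μ ^ (r + a) * c s * (lam ^ τ / (μ ^ ((m : ℝ) * τ) - lam ^ τ)) := by
  set q := lam ^ τ / μ ^ ((m : ℝ) * τ)
  have hM : 0 < μ ^ ((m : ℝ) * τ) := by positivity
  have hq₀ : 0 ≤ q := by positivity
  have hq₁ : q < 1 := (div_lt_one hM).2 hq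
  have hterm (j : ℕ+) :
      lam ^ ((j : ℝ) * τ) * c (s + a - m * j * τ) ≤ μ ^ (r + a) * c s * q ^ (j : ℕ) := by
    have hj : (1 : ℝ) ≤ j := Nat.one_le_cast.2 j.pos
    have hdec := hdecay (m * j * τ - a) (by nlinarith [mul_nonneg (Nat.cast_nonneg m) hτ])
    rw [sub_sub_eq_add_sub] at hdec
    calc lam ^ ((j : ℝ) * τ) * c (s + a - m * j * τ)
        ≤ lam ^ ((j : ℝ) * τ) * (μ ^ (r - (m * j * τ - a)) * c s) :=
          mul_le_mul_of_nonneg_left hdec (by positivity)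
      _ = μ ^ (r + a) * c s * q ^ (j : ℕ) := by
          rw [div_pow, ← rpow_natCast, ← rpow_natCast, ← rpow_mul hlam.le, ← rpow_mul hμ.le,
            sub_sub_eq_add_sub, rpow_sub hμ]
          field_simp
  have hgeo := (hasSum_pnat_geometric_of_lt_one hq₀ hq₁).mul_left (μ ^ (r + a) * c s)
  have hsum := hgeo.summable.of_nonneg_of_le
    (fun j => mul_nonneg (by positivity) (hnonneg _)) hterm
  calc _ ≤ μ ^ (r + a) * c s * (q / (1 - q)) := hasSum_le hterm hsum.hasSum hgeo
    _ = _ := by rw [one_sub_div hM.ne', div_div_div_cancel_right₀ hM.ne']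

end Decay

theorem rpow_mul_le_of_tail_le {lam μ r κ₁ κ₂ L F S x y : ℝ} (hμ : 0 < μ) (hμlam : μ ≤ lam)
    (hκ₂ : 0 ≤ κ₂) (hLr : 0 ≤ L + r) (hx : 0 ≤ x) (hF : 0 ≤ F)
    (hkey : μ ^ r ≤ κ₁ * lam ^ r - κ₂ * lam ^ (4 * (L + r)) * F)
    (hrec : κ₁ * lam ^ r * x - κ₂ * lam ^ (2 * (L + r)) * S ≤ y)
    (hS : S ≤ μ ^ (2 * (L + r)) * x * F) :
    μ ^ r * x ≤ y := by
  have hlam : 0 < lam := hμ.trans_le hμlam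
  have hcorr : κ₂ * lam ^ (2 * (L + r)) * S ≤ κ₂ * lam ^ (4 * (L + r)) * F * x :=
    calc κ₂ * lam ^ (2 * (L + r)) * S ≤ κ₂ * lam ^ (2 * (L + r)) * (μ ^ (2 * (L + r)) * x * F) := by
          gcongr
      _ ≤ κ₂ * lam ^ (2 * (L + r)) * (lam ^ (2 * (L + r)) * x * F) := by
          gcongr
      _ = κ₂ * lam ^ (4 * (L + r)) * F * x := by
          rw [show 4 * (L + r) = 2 * (L + r) + 2 * (L + r) by ring, rpow_add hlam]
          ring
  nlinarith [mul_le_mul_of_nonneg_right hkey hx]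

theorem inductive_growth_estimate_general (lam μ r κ₁ κ₂ L τ : ℝ) (m : ℕ)
    (hμ₁ : 1 < μ) (hμ₂ : μ < lam) (hr : 0 < r)
    (hκ₂ : 0 < κ₂) (hL : 0 ≤ L) (hτ : 0 < τ)
    (hμm : lam < μ ^ (m : ℝ))
    (hmτ : 2 * L + r ≤ (m : ℝ) * τ)
    (hkey : μ ^ r ≤ κ₁ * lam ^ r - κ₂ * lam ^ (4 * (L + r)) * lam ^ τ /
      (μ ^ ((m : ℝ) * τ) - lam ^ τ))
    (c : ℝ → ℝ)
    (hnonneg : ∀ t : ℝ, 0 ≤ c t)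
    (hmono : ∀ s t : ℝ, 0 ≤ s → s ≤ t → c s ≤ c t)
    (hzero : ∀ t : ℝ, t < 0 → c t = 0)
    (hc0 : 1 ≤ c 0)
    (hrec : ∀ s : ℝ, 0 ≤ s →
      κ₁ * lam ^ r * c s -
          κ₂ * lam ^ (2 * (L + r)) *
            ∑' j : ℕ+, lam ^ ((j : ℝ) * τ) * c (s + r + 2 * L - (m : ℝ) * (j : ℝ) * τ)
        ≤ c (s + r)) :
    ∀ i : ℕ, μ ^ ((i : ℝ) * r) ≤ c ((i : ℝ) * r) := by
  have hμ₀ : 0 < μ := by linarith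
  have hlam₀ : 0 < lam := by linarith
  have hq : lam ^ τ < μ ^ ((m : ℝ) * τ) := by
    rw [rpow_mul hμ₀.le]
    exact rpow_lt_rpow hlam₀.le hμm hτ
  have hstep (n : ℕ) : μ ^ r * c (n * r) ≤ c ((n + 1 : ℕ) * r) := by
    induction n using Nat.strong_induction_on with
    | _ n ih =>
    have hdecay (t : ℝ) (ht : 0 ≤ t) : c (n * r - t) ≤ μ ^ (r - t) * c (n * r) :=
      apply_sub_le_rpow_mul_of_step hμ₁.le hr ht hnonneg hmono hzero ih
    have htail := tsum_rpow_mul_apply_le (a := r + 2 * L) hlam₀ hμ₀ hτ.le hq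
      (by linarith) hnonneg hdecay
    simp only [← add_assoc, show r + (r + 2 * L) = 2 * (L + r) by ring] at htail
    rw [mul_div_assoc] at hkey
    rw [Nat.cast_succ, add_one_mul]
    exact rpow_mul_le_of_tail_le hμ₀ hμ₂.le hκ₂.le (by linarith) (hnonneg _)
      (div_nonneg (by positivity) (sub_pos.2 hq).le) hkey (hrec _ (by positivity)) htail
  intro i
  have hchain := pow_mul_le_of_mul_le_succ (a := fun k : ℕ => c (k * r)) (by positivity)
    (fun k _ => hstep k) (k := 0) (d := i) le_rfl
  simp only [Nat.cast_zero, zero_mul, zero_add] at hchain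
  rw [show μ ^ ((i : ℝ) * r) = (μ ^ r) ^ i by rw [mul_comm, rpow_mul hμ₀.le, rpow_natCast]]
  exact le_trans (le_mul_of_one_le_right (by positivity) hc0) hchain

/-- The main inductive estimate: if a nondecreasing nonnegative function `c` on `ℝ` (vanishing
on negative reals, with `c 0 ≥ 1`) satisfies the recursive lower bound
`c (s+r) ≥ κ₁·λ^r·c s - κ₂·λ^{2(L+r)}·Σ_{j≥1} λ^{jτ}·c (s+r+2L-mjτ)`, and if `mτ ≥ 2L + r` and
`κ₁·λ^r - κ₂·λ^{4(L+r)}·λ^τ/(μ^{mτ}-λ^τ) ≥ μ^r` with `μ^m > λ`, then `c (ir) ≥ μ^{ir}` for all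
`i ∈ ℕ`. -/
theorem inductive_growth_estimate (lam μ r κ₁ κ₂ L τ : ℝ) (m : ℕ)
    (hlam : 1 < lam) (hμ₁ : 1 < μ) (hμ₂ : μ < lam) (hr : 0 < r)
    (hκ₁ : 0 < κ₁) (hκ₂ : 0 < κ₂) (hL : 0 ≤ L) (hτ : 0 < τ)
    (hμm : lam < μ ^ (m : ℝ))
    (hmτ : 2 * L + r ≤ (m : ℝ) * τ)
    (hkey : μ ^ r ≤ κ₁ * lam ^ r - κ₂ * lam ^ (4 * (L + r)) * lam ^ τ /
      (μ ^ ((m : ℝ) * τ) - lam ^ τ))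
    (c : ℝ → ℝ)
    (hnonneg : ∀ t : ℝ, 0 ≤ c t)
    (hmono : ∀ s t : ℝ, 0 ≤ s → s ≤ t → c s ≤ c t)
    (hzero : ∀ t : ℝ, t < 0 → c t = 0)
    (hc0 : 1 ≤ c 0)
    (hrec : ∀ s : ℝ, 0 ≤ s →
      κ₁ * lam ^ r * c s -
          κ₂ * lam ^ (2 * (L + r)) *
            ∑' j : ℕ+, lam ^ ((j : ℝ) * τ) * c (s + r + 2 * L - (m : ℝ) * (j : ℝ) * τ)
        ≤ c (s + r)) :
    ∀ i : ℕ, μ ^ ((i : ℝ) * r) ≤ c ((i : ℝ) * r) :=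
  inductive_growth_estimate_general lam μ r κ₁ κ₂ L τ m hμ₁ hμ₂ hr hκ₂ hL hτ hμm hmτ hkey c hnonneg
    hmono hzero hc0 hrec
end
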